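/- arXiv:1302.5729 — 9 statements merged into one kernel-verified Lean document; each statement's English description precedes it below -/
import Mathlib

section
/- Let H be a real M × N matrix, y ∈ ℝ^M, λ₀,…,λ_{N−1} > 0, and let φ : ℝ × ℝ → ℝ be a parametric penalty, writing φ(x; a). Suppose R is a positive definite diagonal N × N matrix with diagonal entries r₀,…,r_{N−1} > 0 such that HᵀH − R is positive semidefinite, and suppose that for each n the scalar function x ↦ ½x² + (λₙ/rₙ)·φ(x; aₙ) is strictly convex on ℝ. Then the function F : ℝ^N → ℝ defined by F(x) = ½‖y − Hx‖₂² + Σ_{n=0}^{N−1} λₙ φ(xₙ; aₙ) is strictly convex. -/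
/-!
Split `F` as `½ (‖y - Hx‖² - xᵀRx) + Σₙ rₙ (½ xₙ² + (λₙ/rₙ) φ(xₙ; aₙ))`. The first part is a
quadratic whose quadratic form is `HᵀH - R ⪰ 0`, hence convex; the second is a sum of strictly
convex functions of separate coordinates with positive weights, hence strictly convex.
-/

open Matrix Set

theorem StrictConvexOn.const_mul {𝕜 E : Type*} [Field 𝕜] [LinearOrder 𝕜] [IsStrictOrderedRing 𝕜]
    [AddCommMonoid E] [Module 𝕜 E] {s : Set E} {f : E → 𝕜} {c : 𝕜} (hc : 0 < c)
    (hf : StrictConvexOn 𝕜 s f) : StrictConvexOn 𝕜 s fun x => c * f x := by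
  refine ⟨hf.1, fun x hx z hz hxz t u ht hu htu => ?_⟩
  have := mul_lt_mul_of_pos_left (hf.2 hx hz hxz ht hu htu) hc
  simp only [smul_eq_mul] at this ⊢
  linarith

theorem strictConvexOn_univ_sum_apply {ι : Type*} [Fintype ι] {g : ι → ℝ → ℝ}
    (hg : ∀ i, StrictConvexOn ℝ univ (g i)) :
    StrictConvexOn ℝ univ fun x : ι → ℝ => ∑ i, g i (x i) := by
  refine ⟨convex_univ, fun x _ z _ hxz t u ht hu htu => ?_⟩
  obtain ⟨i, hi⟩ := Function.ne_iff.mp hxz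
  simp only [smul_eq_mul, Finset.mul_sum, ← Finset.sum_add_distrib, Pi.add_apply,
    Pi.smul_apply]
  refine Finset.sum_lt_sum (fun j _ => ?_) ⟨i, Finset.mem_univ i, ?_⟩
  · exact (hg j).convexOn.2 (mem_univ _) (mem_univ _) ht.le hu.le htu
  · exact (hg i).2 (mem_univ _) (mem_univ _) hi ht hu htu

theorem convexOn_univ_quadratic {ι : Type*} [Fintype ι] {A : Matrix ι ι ℝ} (hA : A.PosSemidef)
    (b : ι → ℝ) (c : ℝ) : ConvexOn ℝ univ fun x => x ⬝ᵥ A *ᵥ x + b ⬝ᵥ x + c := by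
  refine ⟨convex_univ, fun x _ z _ t u ht hu htu => ?_⟩
  have hgap : t * u * ((x - z) ⬝ᵥ A *ᵥ (x - z)) =
      t * (x ⬝ᵥ A *ᵥ x + b ⬝ᵥ x + c) + u * (z ⬝ᵥ A *ᵥ z + b ⬝ᵥ z + c)
        - ((t • x + u • z) ⬝ᵥ A *ᵥ (t • x + u • z) + b ⬝ᵥ (t • x + u • z) + c) := by
    obtain rfl : u = 1 - t := by linarith
    simp only [mulVec_add, mulVec_sub, mulVec_smul, dotProduct_add, dotProduct_sub,
      add_dotProduct, sub_dotProduct, dotProduct_smul, smul_dotProduct, smul_eq_mul]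
    ring
  have hnonneg := hA.dotProduct_mulVec_nonneg (x - z)
  rw [star_trivial] at hnonneg
  simp only [smul_eq_mul]
  nlinarith [mul_nonneg (mul_nonneg ht hu) hnonneg]

theorem sum_sq_sub_mulVec_sub_sum_mul_sq {m n : Type*} [Fintype m] [Fintype n] [DecidableEq n]
    (H : Matrix m n ℝ) (y : m → ℝ) (r x : n → ℝ) :
    ∑ i, (y i - (H *ᵥ x) i) ^ 2 - ∑ j, r j * x j ^ 2 =
      x ⬝ᵥ (Hᵀ * H - Matrix.diagonal r) *ᵥ x + (-2 • (Hᵀ *ᵥ y)) ⬝ᵥ x + y ⬝ᵥ y := by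
  have hsq : ∑ i, (y i - (H *ᵥ x) i) ^ 2 = (y - H *ᵥ x) ⬝ᵥ (y - H *ᵥ x) := by
    simp [dotProduct, sq]
  have hdiag : ∑ j, r j * x j ^ 2 = x ⬝ᵥ Matrix.diagonal r *ᵥ x := by
    simp only [dotProduct, mulVec_diagonal]
    exact Finset.sum_congr rfl fun j _ => by ring
  have hadj : ∀ (u : n → ℝ) (v : m → ℝ), u ⬝ᵥ Hᵀ *ᵥ v = (H *ᵥ u) ⬝ᵥ v := fun u v => by
    rw [dotProduct_mulVec, vecMul_transpose]
  rw [hsq, hdiag, sub_mulVec, ← mulVec_mulVec, smul_dotProduct, dotProduct_comm _ x]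
  simp only [hadj, dotProduct_sub, sub_dotProduct, dotProduct_comm (H *ᵥ x) y]
  ring

theorem strictConvex_of_diagonal_lower_bound_general
    (M N : ℕ) (H : Matrix (Fin M) (Fin N) ℝ) (y : Fin M → ℝ)
    (lam r a : Fin N → ℝ)
    (hr : ∀ n, 0 < r n)
    (φ : ℝ → ℝ → ℝ)
    (hR : (Hᵀ * H - Matrix.diagonal r).PosSemidef)
    (hconv : ∀ n, StrictConvexOn ℝ Set.univ
      (fun x : ℝ => (1/2) * x^2 + (lam n / r n) * φ x (a n))) :
    StrictConvexOn ℝ Set.univ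
      (fun x : Fin N → ℝ =>
        (1/2) * ∑ m, (y m - H.mulVec x m)^2 + ∑ n, lam n * φ (x n) (a n)) := by
  have hsplit : (fun x : Fin N → ℝ =>
        (1/2) * ∑ m, (y m - H.mulVec x m)^2 + ∑ n, lam n * φ (x n) (a n)) =
      fun x => (1/2 : ℝ) • (x ⬝ᵥ (Hᵀ * H - Matrix.diagonal r) *ᵥ x +
          (-2 • (Hᵀ *ᵥ y)) ⬝ᵥ x + y ⬝ᵥ y) +
        ∑ n, r n * ((1/2) * x n ^ 2 + (lam n / r n) * φ (x n) (a n)) := by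
    funext x
    have hpenalty : ∑ n, r n * ((1/2) * x n ^ 2 + (lam n / r n) * φ (x n) (a n)) =
        (1/2) * ∑ n, r n * x n ^ 2 + ∑ n, lam n * φ (x n) (a n) := by
      rw [Finset.mul_sum, ← Finset.sum_add_distrib]
      exact Finset.sum_congr rfl fun n _ => by field_simp [(hr n).ne']
    rw [← sum_sq_sub_mulVec_sub_sum_mul_sq, smul_eq_mul, hpenalty]
    ring
  rw [hsplit]
  exact ((convexOn_univ_quadratic hR _ _).smul (by norm_num)).add_strictConvexOn
    (strictConvexOn_univ_sum_apply fun n => (hconv n).const_mul (hr n))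

/-- If `R = diag(r)` with `r n > 0` satisfies `HᵀH - R ⪰ 0` and, for each `n`,
`x ↦ ½x² + (λₙ/rₙ)·φ(x; aₙ)` is strictly convex, then the total cost
`F(x) = ½‖y - Hx‖² + Σₙ λₙ φ(xₙ; aₙ)` is strictly convex. -/
theorem strictConvex_of_diagonal_lower_bound
    (M N : ℕ) (H : Matrix (Fin M) (Fin N) ℝ) (y : Fin M → ℝ)
    (lam r a : Fin N → ℝ)
    (hlam : ∀ n, 0 < lam n) (hr : ∀ n, 0 < r n)
    (φ : ℝ → ℝ → ℝ)
    (hR : (Hᵀ * H - Matrix.diagonal r).PosSemidef)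
    (hconv : ∀ n, StrictConvexOn ℝ Set.univ
      (fun x : ℝ => (1/2) * x^2 + (lam n / r n) * φ x (a n))) :
    StrictConvexOn ℝ Set.univ
      (fun x : Fin N → ℝ =>
        (1/2) * ∑ m, (y m - H.mulVec x m)^2 + ∑ n, lam n * φ (x n) (a n)) :=
  strictConvex_of_diagonal_lower_bound_general M N H y lam r a hr φ hR hconv
end

section
/- Let H be a real M × N matrix, y ∈ ℝ^M, λ₀,…,λ_{N−1} > 0, and let R be a positive definite diagonal N × N matrix with diagonal entries r₀,…,r_{N−1} > 0 such that HᵀH − R is positive semidefinite. If 0 < aₙ < rₙ/λₙ for each n, then F(x) = ½‖y − Hx‖₂² + Σ_{n=0}^{N−1} λₙ φ_log(xₙ; aₙ) is strictly convex on ℝ^N, where φ_log(x; a) = (1/a)·log(1 + a|x|). -/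
/-!
Write the cost as the sum of `½‖y - Hx‖² - ½ Σₙ rₙ xₙ²`, a quadratic function whose Hessian
`HᵀH - R` is positive semidefinite, hence convex, and the separable function
`Σₙ (rₙ/2 · xₙ² + λₙ φ_log(xₙ; aₙ))`. The penalty is `a`-weakly convex: `φ_log(·; a) + a/2 · (·)²`
is a rescaling of `log (1 + |u|) + u²/2`, which is convex because `t ↦ log (1 + t) + t²/2` is convex
and nondecreasing on `t ≥ 0`. Since `rₙ > λₙ aₙ`, each summand of the separable part is strictly
convex, and a separable sum of strictly convex functions is strictly convex.
-/

open Matrix Set Real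

theorem strictConvexOn_univ_sum_apply_s3 {𝕜 ι β : Type*} {E : ι → Type*} [Fintype ι]
    [Semiring 𝕜] [PartialOrder 𝕜] [∀ i, AddCommMonoid (E i)] [∀ i, Module 𝕜 (E i)]
    [AddCommMonoid β] [PartialOrder β] [IsOrderedCancelAddMonoid β] [Module 𝕜 β]
    {f : ∀ i, E i → β} (hf : ∀ i, StrictConvexOn 𝕜 univ (f i)) :
    StrictConvexOn 𝕜 univ fun x : ∀ i, E i => ∑ i, f i (x i) := by
  refine ⟨convex_univ, fun x _ z _ hxz t s ht hs hts => ?_⟩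
  obtain ⟨i, hi⟩ := Function.ne_iff.mp hxz
  simp only [Pi.add_apply, Pi.smul_apply, Finset.smul_sum, ← Finset.sum_add_distrib]
  exact Finset.sum_lt_sum (fun j _ => (hf j).convexOn.2 trivial trivial ht.le hs.le hts)
    ⟨i, Finset.mem_univ i, (hf i).2 trivial trivial hi ht hs hts⟩

theorem Matrix.PosSemidef.convexOn_dotProduct_mulVec_add {n : Type*} [Fintype n]
    {A : Matrix n n ℝ} (hA : A.PosSemidef) (w : n → ℝ) :
    ConvexOn ℝ univ fun x => x ⬝ᵥ A *ᵥ x + w ⬝ᵥ x := by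
  refine ⟨convex_univ, fun x _ z _ t s ht hs hts => ?_⟩
  obtain rfl : s = 1 - t := by linarith
  have hxz := hA.dotProduct_mulVec_nonneg (x - z)
  simp only [star_trivial, mulVec_sub, dotProduct_sub, sub_dotProduct] at hxz
  simp only [smul_eq_mul, mulVec_add, mulVec_smul, dotProduct_add, add_dotProduct,
    dotProduct_smul, smul_dotProduct]
  -- the convexity gap of a quadratic is `t (1 - t) (x - z) ⬝ A (x - z)`
  nlinarith [mul_nonneg (mul_nonneg ht hs) hxz]

theorem Matrix.sum_sub_mulVec_sq {m n : Type*} [Fintype m] [Fintype n]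
    (H : Matrix m n ℝ) (y : m → ℝ) (x : n → ℝ) :
    ∑ i, (y i - (H *ᵥ x) i) ^ 2 = x ⬝ᵥ (Hᵀ * H) *ᵥ x - 2 * ((Hᵀ *ᵥ y) ⬝ᵥ x) + y ⬝ᵥ y := by
  have hsq : ∑ i, (y i - (H *ᵥ x) i) ^ 2 = (y - H *ᵥ x) ⬝ᵥ (y - H *ᵥ x) := by
    simp only [dotProduct, Pi.sub_apply, sq]
  rw [hsq, ← mulVec_mulVec, dotProduct_mulVec x Hᵀ, vecMul_transpose, mulVec_transpose,
    ← dotProduct_mulVec]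
  simp only [dotProduct_sub, sub_dotProduct, dotProduct_comm (H *ᵥ x) y]
  ring

theorem convexOn_log_one_add_add_sq_div_two :
    ConvexOn ℝ (Ici 0) fun t : ℝ => log (1 + t) + t ^ 2 / 2 := by
  have hderiv : ∀ t : ℝ, 0 ≤ t →
      HasDerivAt (fun t : ℝ => log (1 + t) + t ^ 2 / 2) (1 / (1 + t) + t) t := by
    intro t ht
    refine ((((hasDerivAt_id' t).const_add 1).log (by positivity)).add
      ((hasDerivAt_pow 2 t).div_const 2)).congr_deriv ?_
    norm_num
  apply MonotoneOn.convexOn_of_deriv (convex_Ici 0)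
  · exact fun t ht => (hderiv t ht).continuousAt.continuousWithinAt
  · rw [interior_Ici]
    exact fun t ht => (hderiv t (le_of_lt ht)).differentiableAt.differentiableWithinAt
  · rw [interior_Ici]
    intro u (hu : 0 < u) v (hv : 0 < v) huv
    rw [(hderiv u hu.le).deriv, (hderiv v hv.le).deriv, div_add' _ _ _ (by positivity),
      div_add' _ _ _ (by positivity), div_le_div_iff₀ (by positivity) (by positivity)]
    nlinarith [mul_nonneg (sub_nonneg.2 huv) (by positivity : 0 ≤ u + v + u * v)]

theorem convexOn_log_one_add_abs_add_sq_div_two :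
    ConvexOn ℝ univ fun u : ℝ => log (1 + |u|) + u ^ 2 / 2 := by
  have himage : (norm : ℝ → ℝ) '' univ = Ici 0 :=
    ext fun t => ⟨fun ⟨u, _, hu⟩ => hu ▸ norm_nonneg u,
      fun ht => ⟨t, trivial, Real.norm_of_nonneg ht⟩⟩
  have hmono : MonotoneOn (fun t : ℝ => log (1 + t) + t ^ 2 / 2) (Ici 0) := by
    intro u (hu : 0 ≤ u) v _ huv
    dsimp only
    gcongr
  refine ((himage ▸ convexOn_log_one_add_add_sq_div_two).comp (convexOn_norm convex_univ)
    (himage ▸ hmono)).congr fun u _ => ?_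
  simp only [Function.comp_apply, Real.norm_eq_abs, sq_abs]

theorem convexOn_log_penalty_add_sq {a : ℝ} (ha : 0 < a) :
    ConvexOn ℝ univ fun u : ℝ => 1 / a * log (1 + a * |u|) + a / 2 * u ^ 2 := by
  refine ((convexOn_log_one_add_abs_add_sq_div_two.comp_linearMap (a • LinearMap.id)).smul
    (one_div_pos.2 ha).le).congr fun u _ => ?_
  simp only [Function.comp_apply, LinearMap.smul_apply, LinearMap.id_apply, smul_eq_mul, abs_mul,
    abs_of_pos ha]
  field_simp

theorem strictConvexOn_const_mul_sq {c : ℝ} (hc : 0 < c) :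
    StrictConvexOn ℝ univ fun u : ℝ => c * u ^ 2 := by
  refine ⟨convex_univ, fun x _ z _ hxz t s ht hs hts => ?_⟩
  obtain rfl : s = 1 - t := by linarith
  have hgap := mul_pos (mul_pos hc (mul_pos ht hs)) (pow_pos (abs_pos.2 (sub_ne_zero.2 hxz)) 2)
  simp only [smul_eq_mul, sq_abs] at hgap ⊢
  nlinarith

theorem strictConvexOn_sq_add_log_penalty {r lam a : ℝ} (hlam : 0 ≤ lam) (ha : 0 < a)
    (hr : lam * a < r) :
    StrictConvexOn ℝ univ fun u : ℝ => r / 2 * u ^ 2 + lam * (1 / a * log (1 + a * |u|)) := by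
  refine ((strictConvexOn_const_mul_sq (c := (r - lam * a) / 2) (by linarith)).add_convexOn
    ((convexOn_log_penalty_add_sq ha).smul hlam)).congr fun u _ => ?_
  simp only [Pi.add_apply, smul_eq_mul]
  ring

theorem strictConvex_log_penalty_cost_general
    (M N : ℕ) (H : Matrix (Fin M) (Fin N) ℝ) (y : Fin M → ℝ)
    (lam r a : Fin N → ℝ)
    (hlam : ∀ n, 0 < lam n)
    (hR : (Hᵀ * H - Matrix.diagonal r).PosSemidef)
    (ha : ∀ n, 0 < a n) (ha' : ∀ n, a n < r n / lam n) :
    StrictConvexOn ℝ Set.univ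
      (fun x : Fin N → ℝ =>
        (1/2) * ∑ m, (y m - H.mulVec x m)^2
          + ∑ n, lam n * ((1 / a n) * Real.log (1 + a n * |x n|))) := by
  have hsep := strictConvexOn_univ_sum_apply_s3 fun n => strictConvexOn_sq_add_log_penalty
    (hlam n).le (ha n) ((lt_div_iff₀' (hlam n)).1 (ha' n))
  have hquad := (hR.convexOn_dotProduct_mulVec_add ((-2 : ℝ) • (Hᵀ *ᵥ y))).smul
    (by norm_num : (0 : ℝ) ≤ 1 / 2)
  refine ((hsep.add_convexOn hquad).add_const (y ⬝ᵥ y / 2)).congr fun x _ => ?_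
  have hdiag : ∑ n, r n / 2 * x n ^ 2 = x ⬝ᵥ diagonal r *ᵥ x / 2 := by
    simp only [dotProduct, mulVec_diagonal, Finset.sum_div]
    exact Finset.sum_congr rfl fun n _ => by ring
  simp only [Pi.add_apply, smul_eq_mul, sum_sub_mulVec_sq, sub_mulVec, dotProduct_sub,
    smul_dotProduct, Finset.sum_add_distrib, hdiag]
  ring

/-- If `R = diag(r)` with `r n > 0` satisfies `HᵀH - R ⪰ 0` and `0 < aₙ < rₙ/λₙ`,
then the cost with logarithmic penalty `φ_log(x; a) = (1/a)·log(1 + a|x|)` is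
strictly convex. -/
theorem strictConvex_log_penalty_cost
    (M N : ℕ) (H : Matrix (Fin M) (Fin N) ℝ) (y : Fin M → ℝ)
    (lam r a : Fin N → ℝ)
    (hlam : ∀ n, 0 < lam n) (hr : ∀ n, 0 < r n)
    (hR : (Hᵀ * H - Matrix.diagonal r).PosSemidef)
    (ha : ∀ n, 0 < a n) (ha' : ∀ n, a n < r n / lam n) :
    StrictConvexOn ℝ Set.univ
      (fun x : Fin N → ℝ =>
        (1/2) * ∑ m, (y m - H.mulVec x m)^2
          + ∑ n, lam n * ((1 / a n) * Real.log (1 + a n * |x n|))) :=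
  strictConvex_log_penalty_cost_general M N H y lam r a hlam hR ha ha'
end

section
/- Let H be a real M × N matrix, y ∈ ℝ^M, λ₀,…,λ_{N−1} > 0, and let R be a positive definite diagonal N × N matrix with diagonal entries r₀,…,r_{N−1} > 0 such that HᵀH − R is positive semidefinite. If 0 < aₙ < rₙ/λₙ for each n, then F(x) = ½‖y − Hx‖₂² + Σ_{n=0}^{N−1} λₙ φ_atan(xₙ; aₙ) is strictly convex on ℝ^N, where φ_atan(x; a) = (2/(a√3))·(arctan((1 + 2a|x|)/√3) − π/6). -/
/-!
The cost splits as `Q x + ∑ₙ Pₙ (xₙ)` with `Q x = ½‖y - Hx‖² - ½ xᵀRx` and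
`Pₙ t = rₙ/2 t² + λₙ φ(|t|; aₙ)`. The quadratic `Q` is convex since its Hessian is `HᵀH - R ⪰ 0`.
The penalty is `a`-weakly convex: `φ'(u; a) = 1 / (1 + au + a²u²)`, which makes
`u ↦ a/2 u² + φ(u; a)` convex, and it is nondecreasing on `[0, ∞)`, so it stays convex after
composing with `|·|`. Thus `Pₙ t = (rₙ - λₙaₙ)/2 t² + λₙ (aₙ/2 t² + φ(|t|; aₙ))` is strictly
convex as `λₙaₙ < rₙ`, and a separable sum of strictly convex functions is strictly convex.
-/

open Real Set Finset Matrix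

theorem ConvexOn.comp_norm {E : Type*} [SeminormedAddCommGroup E] [NormedSpace ℝ E]
    {g : ℝ → ℝ} (hg : ConvexOn ℝ (Ici 0) g) (hg' : MonotoneOn g (Ici 0)) :
    ConvexOn ℝ univ (fun x : E => g ‖x‖) := by
  refine ⟨convex_univ, fun x _ z _ a b ha hb hab => ?_⟩
  calc g ‖a • x + b • z‖ ≤ g (a * ‖x‖ + b * ‖z‖) :=
        hg' (norm_nonneg _) (by simp only [Set.mem_Ici]; positivity) <| by
          simpa [norm_smul, abs_of_nonneg ha, abs_of_nonneg hb] using norm_add_le (a • x) (b • z)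
    _ ≤ a • g ‖x‖ + b • g ‖z‖ := hg.2 (norm_nonneg x) (norm_nonneg z) ha hb hab

theorem strictConvexOn_mul_sq {c : ℝ} (hc : 0 < c) :
    StrictConvexOn ℝ univ (fun t : ℝ => c * t ^ 2) :=
  strictConvexOn_univ_of_deriv2_pos (by fun_prop) fun t => by simp [hc]

theorem strictConvexOn_sum_apply {ι : Type*} [Fintype ι] {g : ι → ℝ → ℝ}
    (hg : ∀ i, StrictConvexOn ℝ univ (g i)) :
    StrictConvexOn ℝ univ (fun x : ι → ℝ => ∑ i, g i (x i)) := by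
  refine ⟨convex_univ, fun x _ z _ hxz a b ha hb hab => ?_⟩
  obtain ⟨i₀, hi₀⟩ := Function.ne_iff.mp hxz
  simp only [smul_eq_mul, Pi.add_apply, Pi.smul_apply, mul_sum, ← sum_add_distrib]
  refine sum_lt_sum (fun i _ => ?_) ⟨i₀, mem_univ i₀, ?_⟩
  · simpa using (hg i).convexOn.2 (mem_univ (x i)) (mem_univ (z i)) ha.le hb.le hab
  · simpa using (hg i₀).2 (mem_univ (x i₀)) (mem_univ (z i₀)) hi₀ ha hb hab

theorem sum_mul_sq_add_mul {ι : Type*} (s : Finset ι) (c u v : ι → ℝ) {a b : ℝ} (hab : a + b = 1) :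
    ∑ i ∈ s, c i * (a * u i + b * v i) ^ 2
      = a * ∑ i ∈ s, c i * u i ^ 2 + b * ∑ i ∈ s, c i * v i ^ 2
        - a * b * ∑ i ∈ s, c i * (u i - v i) ^ 2 := by
  obtain rfl : b = 1 - a := by linarith
  simp only [mul_sum, ← sum_add_distrib, ← sum_sub_distrib]
  exact sum_congr rfl fun i _ => by ring

theorem dotProduct_transpose_mul_sub_diagonal_mulVec {m n : Type*} [Fintype m] [Fintype n]
    [DecidableEq n] (H : Matrix m n ℝ) (r d : n → ℝ) :
    d ⬝ᵥ (Hᵀ * H - diagonal r) *ᵥ d = ∑ i, (H *ᵥ d) i ^ 2 - ∑ j, r j * d j ^ 2 := by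
  rw [sub_mulVec, dotProduct_sub, ← mulVec_mulVec, dotProduct_mulVec, vecMul_transpose]
  simp only [dotProduct, mulVec_diagonal, sq]
  congr 1
  exact sum_congr rfl fun j _ => by ring

theorem convexOn_half_sum_sq_sub_sum_mul_sq {m n : Type*} [Fintype m] [Fintype n]
    [DecidableEq n] (H : Matrix m n ℝ) (y : m → ℝ) (r : n → ℝ)
    (hR : (Hᵀ * H - diagonal r).PosSemidef) :
    ConvexOn ℝ univ (fun x => (1 / 2) * ∑ i, (y i - (H *ᵥ x) i) ^ 2 - ∑ j, r j / 2 * x j ^ 2) := by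
  refine ⟨convex_univ, fun x _ z _ a b ha hb hab => ?_⟩
  have hgap := hR.dotProduct_mulVec_nonneg (x - z)
  rw [show star (x - z) = x - z from rfl, dotProduct_transpose_mul_sub_diagonal_mulVec] at hgap
  have hres (i : m) :
      y i - (H *ᵥ (a • x + b • z)) i = a * (y i - (H *ᵥ x) i) + b * (y i - (H *ᵥ z) i) := by
    simp only [mulVec_add, mulVec_smul, Pi.add_apply, Pi.smul_apply, smul_eq_mul]
    linear_combination y i * hab.symm
  have hdiff (i : m) : (y i - (H *ᵥ x) i) - (y i - (H *ᵥ z) i) = -(H *ᵥ (x - z)) i := by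
    simp only [mulVec_sub, Pi.sub_apply]
    ring
  have hS := sum_mul_sq_add_mul univ 1 (fun i => y i - (H *ᵥ x) i) (fun i => y i - (H *ᵥ z) i) hab
  have hT := sum_mul_sq_add_mul univ (fun j => r j / 2) x z hab
  simp only [Pi.one_apply, one_mul, hdiff, neg_sq] at hS
  simp only [smul_eq_mul, Pi.add_apply, Pi.smul_apply, hres, hS, hT]
  have hT' : ∑ j, r j / 2 * (x j - z j) ^ 2 = (1 / 2) * ∑ j, r j * (x - z) j ^ 2 := by
    rw [mul_sum]
    exact sum_congr rfl fun j _ => by simp only [Pi.sub_apply]; ring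
  rw [hT']
  linarith [mul_nonneg (mul_nonneg ha hb) hgap]

-- `φ_atan(x; a) = atanPenalty a |x|`
noncomputable def atanPenalty (a u : ℝ) : ℝ :=
  2 / (a * √3) * (arctan ((1 + 2 * a * u) / √3) - π / 6)

theorem one_add_mul_add_sq_pos (a u : ℝ) : 0 < 1 + a * u + a ^ 2 * u ^ 2 := by
  nlinarith [sq_nonneg (a * u + 1 / 2)]

theorem hasDerivAt_atanPenalty {a : ℝ} (ha : a ≠ 0) (u : ℝ) :
    HasDerivAt (atanPenalty a) (1 / (1 + a * u + a ^ 2 * u ^ 2)) u := by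
  have h3 : √3 ^ 2 = 3 := sq_sqrt (by norm_num)
  have hw : HasDerivAt (fun u => (1 + 2 * a * u) / √3) (2 * a / √3) u := by
    simpa using (((hasDerivAt_id u).const_mul (2 * a)).const_add 1).div_const √3
  refine ((hw.arctan.sub_const (π / 6)).const_mul (2 / (a * √3))).congr_deriv ?_
  have hp := (one_add_mul_add_sq_pos a u).ne'
  rw [div_pow, h3]
  field_simp
  rw [h3]
  ring

theorem hasDerivAt_one_div_one_add_mul_add_sq (a u : ℝ) :
    HasDerivAt (fun u => 1 / (1 + a * u + a ^ 2 * u ^ 2))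
      (-(a + 2 * a ^ 2 * u) / (1 + a * u + a ^ 2 * u ^ 2) ^ 2) u := by
  have hp : HasDerivAt (fun u => 1 + a * u + a ^ 2 * u ^ 2) (a + 2 * a ^ 2 * u) u := by
    refine ((((hasDerivAt_id u).const_mul a).const_add 1).add
      ((hasDerivAt_pow 2 u).const_mul (a ^ 2))).congr_deriv ?_
    simp only [mul_one, Nat.cast_ofNat]
    ring
  simpa only [one_div] using hp.fun_inv (one_add_mul_add_sq_pos a u).ne'

theorem monotone_atanPenalty {a : ℝ} (ha : 0 < a) : Monotone (atanPenalty a) :=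
  monotone_of_hasDerivAt_nonneg (hasDerivAt_atanPenalty ha.ne')
    fun u => (one_div_pos.2 (one_add_mul_add_sq_pos a u)).le

theorem convexOn_mul_sq_add_atanPenalty {a : ℝ} (ha : 0 < a) :
    ConvexOn ℝ univ (fun u => a / 2 * u ^ 2 + atanPenalty a u) := by
  have hf (u : ℝ) : HasDerivAt (fun u => a / 2 * u ^ 2 + atanPenalty a u)
      (a * u + 1 / (1 + a * u + a ^ 2 * u ^ 2)) u := by
    refine (((hasDerivAt_pow 2 u).const_mul (a / 2)).add
      (hasDerivAt_atanPenalty ha.ne' u)).congr_deriv ?_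
    simp only [Nat.cast_ofNat]
    ring
  have hf' (u : ℝ) : HasDerivAt (fun u => a * u + 1 / (1 + a * u + a ^ 2 * u ^ 2))
      (a + -(a + 2 * a ^ 2 * u) / (1 + a * u + a ^ 2 * u ^ 2) ^ 2) u :=
    (((hasDerivAt_id u).const_mul a).add
      (hasDerivAt_one_div_one_add_mul_add_sq a u)).congr_deriv (by ring)
  refine convexOn_of_hasDerivWithinAt2_nonneg convex_univ
    (fun u _ => (hf u).continuousAt.continuousWithinAt) (fun u _ => (hf u).hasDerivWithinAt)
    (fun u _ => (hf' u).hasDerivWithinAt) fun u _ => ?_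
  have key : a * (1 + a * u + a ^ 2 * u ^ 2) ^ 2 - (a + 2 * a ^ 2 * u)
      = a * (a * u) ^ 2 * ((a * u + 1) ^ 2 + 2) := by ring
  rw [neg_div, ← sub_eq_add_neg, sub_nonneg, div_le_iff₀ (pow_pos (one_add_mul_add_sq_pos a u) 2)]
  linarith [key, show 0 ≤ a * (a * u) ^ 2 * ((a * u + 1) ^ 2 + 2) by positivity]

theorem strictConvexOn_mul_sq_add_mul_atanPenalty_abs {r lam a : ℝ} (hlam : 0 ≤ lam)
    (ha : 0 < a) (hr : lam * a < r) :
    StrictConvexOn ℝ univ (fun t => r / 2 * t ^ 2 + lam * atanPenalty a |t|) := by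
  have hmono : MonotoneOn (fun u => a / 2 * u ^ 2 + atanPenalty a u) (Ici 0) :=
    fun u hu v _ huv => add_le_add (by gcongr) (monotone_atanPenalty ha huv)
  have hconv := (convexOn_mul_sq_add_atanPenalty ha).subset (subset_univ _) (convex_Ici 0)
  have hpen := (hconv.comp_norm (E := ℝ) hmono).smul hlam
  refine ((strictConvexOn_mul_sq (c := (r - lam * a) / 2) (by linarith)).add_convexOn hpen).congr
    fun t _ => ?_
  simp only [Pi.add_apply, smul_eq_mul, Real.norm_eq_abs, sq_abs]
  ring

theorem strictConvex_atan_penalty_cost_general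
    (M N : ℕ) (H : Matrix (Fin M) (Fin N) ℝ) (y : Fin M → ℝ)
    (lam r a : Fin N → ℝ)
    (hlam : ∀ n, 0 < lam n)
    (hR : (Hᵀ * H - Matrix.diagonal r).PosSemidef)
    (ha : ∀ n, 0 < a n) (ha' : ∀ n, a n < r n / lam n) :
    StrictConvexOn ℝ Set.univ
      (fun x : Fin N → ℝ =>
        (1/2) * ∑ m, (y m - H.mulVec x m)^2
          + ∑ n, lam n * ((2 / (a n * Real.sqrt 3)) *
              (Real.arctan ((1 + 2 * a n * |x n|) / Real.sqrt 3) - Real.pi / 6))) := by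
  have hra (n : Fin N) : lam n * a n < r n := by
    linarith [(lt_div_iff₀ (hlam n)).1 (ha' n)]
  have hsep := strictConvexOn_sum_apply fun n =>
    strictConvexOn_mul_sq_add_mul_atanPenalty_abs (hlam n).le (ha n) (hra n)
  refine ((convexOn_half_sum_sq_sub_sum_mul_sq H y r hR).add_strictConvexOn hsep).congr
    fun x _ => ?_
  simp only [Pi.add_apply, atanPenalty, sum_add_distrib]
  ring

/-- If `R = diag(r)` with `r n > 0` satisfies `HᵀH - R ⪰ 0` and `0 < aₙ < rₙ/λₙ`,
then the cost with arctangent penalty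
`φ_atan(x; a) = (2/(a√3))·(arctan((1 + 2a|x|)/√3) − π/6)` is strictly convex. -/
theorem strictConvex_atan_penalty_cost
    (M N : ℕ) (H : Matrix (Fin M) (Fin N) ℝ) (y : Fin M → ℝ)
    (lam r a : Fin N → ℝ)
    (hlam : ∀ n, 0 < lam n) (hr : ∀ n, 0 < r n)
    (hR : (Hᵀ * H - Matrix.diagonal r).PosSemidef)
    (ha : ∀ n, 0 < a n) (ha' : ∀ n, a n < r n / lam n) :
    StrictConvexOn ℝ Set.univ
      (fun x : Fin N → ℝ =>
        (1/2) * ∑ m, (y m - H.mulVec x m)^2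
          + ∑ n, lam n * ((2 / (a n * Real.sqrt 3)) *
              (Real.arctan ((1 + 2 * a n * |x n|) / Real.sqrt 3) - Real.pi / 6))) :=
  strictConvex_atan_penalty_cost_general M N H y lam r a hlam hR ha ha'
end

section
/- Let λ > 0 and let φ : ℝ → ℝ be an even function, continuous on ℝ, twice continuously differentiable on (0, ∞), with right derivative at 0 satisfying φ'(0⁺) ≥ 0. If φ''(x) > −1/λ for all x > 0, then for every y ∈ ℝ the function F(x) = ½(y − x)² + λφ(x) is strictly convex on ℝ. -/
/-!
Up to an affine term, `F` is `g x = x ^ 2 / 2 + λ φ x`, which is even. On `[0, ∞)` we have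
`g'' = 1 + λ φ'' > 0`, so `g` is strictly convex there, and since `g'(0⁺) = λ φ'(0⁺) ≥ 0` it is
also strictly increasing there. Hence `g = g ∘ |·|` is a strictly increasing strictly convex
function of the convex function `|·|`, and so strictly convex on `ℝ`.
-/

open Set

lemma strictConvexOn_of_hasDerivAt2_pos {D : Set ℝ} (hD : Convex ℝ D) {f f' f'' : ℝ → ℝ}
    (hf : ContinuousOn f D) (hf' : ∀ x ∈ interior D, HasDerivAt f (f' x) x)
    (hf'' : ∀ x ∈ interior D, HasDerivAt f' (f'' x) x) (hf''₀ : ∀ x ∈ interior D, 0 < f'' x) :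
    StrictConvexOn ℝ D f := by
  have hf'_mono : StrictMonoOn f' (interior D) := by
    refine strictMonoOn_of_hasDerivWithinAt_pos (f' := f'') hD.interior
      (fun x hx ↦ (hf'' x hx).continuousAt.continuousWithinAt) ?_ ?_ <;>
    rw [interior_interior]
    · exact fun x hx ↦ (hf'' x hx).hasDerivWithinAt
    · exact hf''₀
  exact (hf'_mono.congr fun x hx ↦ (hf' x hx).deriv.symm).strictConvexOn_of_deriv hD hf

lemma StrictConvexOn.strictMonoOn_of_hasDerivWithinAt_nonneg {f : ℝ → ℝ} {a d : ℝ}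
    (hf : StrictConvexOn ℝ (Ici a) f) (hd : HasDerivWithinAt f d (Ici a) a) (hd₀ : 0 ≤ d) :
    StrictMonoOn f (Ici a) := by
  have hslope : ∀ v, a < v → 0 < slope f a v := fun v hv ↦
    hd₀.trans_lt (hf.lt_slope_of_hasDerivWithinAt self_mem_Ici (le_of_lt hv) hv hd)
  intro u hu v hv huv
  rw [← slope_pos_iff_of_le huv.le]
  rcases (mem_Ici.1 hu).eq_or_lt with rfl | hau
  · exact hslope v huv
  · have hadj := hf.slope_strict_mono_adjacent self_mem_Ici hv hau huv
    rw [← slope_def_field, ← slope_def_field] at hadj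
    exact (hslope u hau).trans hadj

lemma StrictConvexOn.comp_abs {f : ℝ → ℝ} (hf : StrictConvexOn ℝ (Ici 0) f)
    (hf_mono : StrictMonoOn f (Ici 0)) : StrictConvexOn ℝ univ fun x ↦ f |x| := by
  refine ⟨convex_univ, fun x _ z _ hxz a b ha hb hab ↦ ?_⟩
  simp only [smul_eq_mul] at *
  rcases eq_or_ne |x| |z| with heq | hne
  · obtain rfl : z = -x := neg_eq_iff_eq_neg.1 ((abs_eq_abs.1 heq).resolve_left hxz).symm
    have hx : 0 < |x| := abs_pos.2 fun h ↦ hxz (by simp [h])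
    have hmid : |a * x + b * -x| < |x| := by
      rw [show a * x + b * -x = (a - b) * x by ring, abs_mul]
      exact mul_lt_of_lt_one_left hx (abs_sub_lt_iff.2 ⟨by linarith, by linarith⟩)
    calc f |a * x + b * -x| < f |x| :=
          hf_mono (mem_Ici.2 (abs_nonneg _)) (mem_Ici.2 (abs_nonneg x)) hmid
      _ = a * f |x| + b * f |-x| := by rw [abs_neg, ← add_mul, hab, one_mul]
  · have htri : |a * x + b * z| ≤ a * |x| + b * |z| := by
      simpa [abs_mul, abs_of_pos ha, abs_of_pos hb] using abs_add_le (a * x) (b * z)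
    calc f |a * x + b * z| ≤ f (a * |x| + b * |z|) :=
          hf_mono.monotoneOn (mem_Ici.2 (abs_nonneg _)) (mem_Ici.2 (by positivity)) htri
      _ < a * f |x| + b * f |z| := hf.2 (abs_nonneg x) (abs_nonneg z) hne ha hb hab

lemma Function.Even.strictConvexOn_univ_of_rightDeriv_nonneg {f : ℝ → ℝ} {d : ℝ}
    (heven : f.Even) (hf : StrictConvexOn ℝ (Ici 0) f) (hd : HasDerivWithinAt f d (Ici 0) 0)
    (hd₀ : 0 ≤ d) : StrictConvexOn ℝ univ f := by
  have hf_abs : (fun x ↦ f |x|) = f := funext fun x ↦ by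
    rcases abs_choice x with h | h <;> simp only [h, heven x]
  exact hf_abs ▸ hf.comp_abs (hf.strictMonoOn_of_hasDerivWithinAt_nonneg hd hd₀)

theorem strictConvex_of_second_derivative_bound_general
    (lam : ℝ) (hlam : 0 < lam)
    (φ φ' φ'' : ℝ → ℝ)
    (heven : ∀ x, φ (-x) = φ x)
    (hcont : Continuous φ)
    (hderiv1 : ∀ x ∈ Set.Ioi (0:ℝ), HasDerivAt φ (φ' x) x)
    (hderiv2 : ∀ x ∈ Set.Ioi (0:ℝ), HasDerivAt φ' (φ'' x) x)
    (d : ℝ) (hd0 : HasDerivWithinAt φ d (Set.Ici 0) 0) (hdnonneg : 0 ≤ d)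
    (hsec : ∀ x ∈ Set.Ioi (0:ℝ), -(1/lam) < φ'' x) :
    ∀ y : ℝ, StrictConvexOn ℝ Set.univ
      (fun x : ℝ => (1/2) * (y - x)^2 + lam * φ x) := by
  intro y
  let g : ℝ → ℝ := fun x ↦ x ^ 2 / 2 + lam * φ x
  have hg_conv : StrictConvexOn ℝ (Ici 0) g := by
    refine strictConvexOn_of_hasDerivAt2_pos (convex_Ici 0) (by fun_prop)
      (f' := fun x ↦ x + lam * φ' x) (f'' := fun x ↦ 1 + lam * φ'' x) ?_ ?_ ?_ <;>
    rw [interior_Ici] <;> intro x hx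
    · exact (((hasDerivAt_pow 2 x).div_const 2).add ((hderiv1 x hx).const_mul lam)).congr_deriv
        (by norm_num)
    · exact (hasDerivAt_id x).add ((hderiv2 x hx).const_mul lam)
    · have hbound := mul_lt_mul_of_pos_left (hsec x hx) hlam
      rw [mul_neg, mul_one_div_cancel hlam.ne'] at hbound
      linarith
  have hg_deriv : HasDerivWithinAt g (lam * d) (Ici 0) 0 :=
    (((hasDerivAt_pow 2 (0 : ℝ)).div_const 2).hasDerivWithinAt.add
      (hd0.const_mul lam)).congr_deriv (by norm_num)
  have hg : StrictConvexOn ℝ univ g :=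
    Function.Even.strictConvexOn_univ_of_rightDeriv_nonneg (fun x ↦ by simp [g, heven]) hg_conv
      hg_deriv (mul_nonneg hlam.le hdnonneg)
  have haff : ConvexOn ℝ univ fun x : ℝ ↦ (-y) • x + y ^ 2 / 2 :=
    ((-y • LinearMap.id).convexOn convex_univ).add_const _
  have hF : (fun x : ℝ ↦ (1/2) * (y - x)^2 + lam * φ x) = g + fun x ↦ (-y) • x + y ^ 2 / 2 := by
    funext x
    simp only [g, Pi.add_apply, smul_eq_mul]
    ring
  exact hF ▸ hg.add_convexOn haff

/-- If `φ` is even, continuous, twice continuously differentiable on `(0,∞)`,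
has right derivative `φ'(0⁺) ≥ 0` at `0`, and `φ''(x) > -1/λ` for `x > 0`,
then `F(x) = ½(y−x)² + λφ(x)` is strictly convex for every `y`. -/
theorem strictConvex_of_second_derivative_bound
    (lam : ℝ) (hlam : 0 < lam)
    (φ φ' φ'' : ℝ → ℝ)
    (heven : ∀ x, φ (-x) = φ x)
    (hcont : Continuous φ)
    (hderiv1 : ∀ x ∈ Set.Ioi (0:ℝ), HasDerivAt φ (φ' x) x)
    (hderiv2 : ∀ x ∈ Set.Ioi (0:ℝ), HasDerivAt φ' (φ'' x) x)
    (hC2 : ContinuousOn φ'' (Set.Ioi 0))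
    (d : ℝ) (hd0 : HasDerivWithinAt φ d (Set.Ici 0) 0) (hdnonneg : 0 ≤ d)
    (hsec : ∀ x ∈ Set.Ioi (0:ℝ), -(1/lam) < φ'' x) :
    ∀ y : ℝ, StrictConvexOn ℝ Set.univ
      (fun x : ℝ => (1/2) * (y - x)^2 + lam * φ x) :=
  strictConvex_of_second_derivative_bound_general lam hlam φ φ' φ'' heven hcont hderiv1 hderiv2 d
    hd0 hdnonneg hsec
end

section
/- Let λ > 0 and 0 < a ≤ 1/λ. Then for every y ∈ ℝ the function F(x) = ½(y − x)² + λ·φ_log(x; a), where φ_log(x; a) = (1/a)·log(1 + a|x|), is strictly convex on ℝ. -/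
/-!
Up to an affine function of `x`, `F(x) = h |x|` with `h t = t²/2 + (λ/a) log (1 + a t)`.
On `t ≥ 0`, `h` is strictly increasing, and `h' t = t + λ / (1 + a t)` is strictly increasing
because `λ a ≤ 1 < (1 + a s)(1 + a t)` for `0 ≤ s < t`; so `h` is strictly convex there.
A strictly convex, strictly increasing function of `|x|` is strictly convex on `ℝ`: when
`|x| ≠ |z|` strict convexity of `h` gives the strict inequality, and when `x = -z` the strict
triangle inequality does.
-/

open Set Real

theorem StrictConvexOn.comp_abs_s6 {g : ℝ → ℝ} (hg : StrictConvexOn ℝ (Ici 0) g)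
    (hg' : StrictMonoOn g (Ici 0)) : StrictConvexOn ℝ univ fun x => g |x| := by
  refine ⟨convex_univ, fun x _ z _ hxz t s ht hs hts => ?_⟩
  simp only [smul_eq_mul]
  have hmem : ∀ u : ℝ, |u| ∈ Ici (0 : ℝ) := abs_nonneg
  have hcomb : t * |x| + s * |z| ∈ Ici (0 : ℝ) := by simp only [mem_Ici]; positivity
  have htri : |t * x + s * z| ≤ t * |x| + s * |z| := by
    simpa only [abs_mul, abs_of_pos ht, abs_of_pos hs] using abs_add_le (t * x) (s * z)
  by_cases habs : |x| = |z|
  · obtain rfl : x = -z := (abs_eq_abs.1 habs).resolve_left hxz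
    have hz : 0 < |z| := abs_pos.2 fun hz => hxz (by simp [hz])
    have hts' : |s - t| < 1 := abs_sub_lt_iff.2 ⟨by linarith, by linarith⟩
    have hlt : |t * -z + s * z| < t * |-z| + s * |z| := by
      rw [show t * -z + s * z = (s - t) * z by ring, abs_mul, abs_neg, ← add_mul, hts, one_mul]
      exact mul_lt_of_lt_one_left hz hts'
    calc g |t * -z + s * z| < g (t * |-z| + s * |z|) := hg' (hmem _) hcomb hlt
      _ ≤ t * g |-z| + s * g |z| := hg.convexOn.2 (hmem _) (hmem _) ht.le hs.le hts
  · calc g |t * x + s * z| ≤ g (t * |x| + s * |z|) := hg'.monotoneOn (hmem _) hcomb htri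
      _ < t * g |x| + s * g |z| := hg.2 (hmem _) (hmem _) habs ht hs hts

section LogPenalty

variable {lam a : ℝ}

theorem hasDerivAt_half_sq_add_log {t : ℝ} (ha : a ≠ 0) (ht : 0 < 1 + a * t) :
    HasDerivAt (fun u => 1 / 2 * u ^ 2 + lam * (1 / a * log (1 + a * u)))
      (t + lam / (1 + a * t)) t := by
  have hlog : HasDerivAt (fun u => log (1 + a * u)) (a / (1 + a * t)) t := by
    simpa using (((hasDerivAt_id t).const_mul a).const_add 1).log ht.ne'
  refine (((hasDerivAt_pow 2 t).const_mul (1 / 2)).add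
    ((hlog.const_mul (1 / a)).const_mul lam)).congr_deriv ?_
  field_simp
  ring

theorem strictMonoOn_add_div_one_add_mul (ha : 0 < a) (hla : lam * a ≤ 1) :
    StrictMonoOn (fun t => t + lam / (1 + a * t)) (Ici 0) := by
  intro s (hs : 0 ≤ s) t (ht : 0 ≤ t) hst
  have hs' : 0 < 1 + a * s := by positivity
  have ht' : 0 < 1 + a * t := by positivity
  -- the difference quotient of `lam / (1 + a u)` is `-lam a / ((1 + a s)(1 + a t)) > -1`
  have hprod : lam * a < (1 + a * s) * (1 + a * t) := by nlinarith [mul_pos ha (hs.trans_lt hst)]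
  have key : lam / (1 + a * s) - lam / (1 + a * t) < t - s := by
    rw [div_sub_div _ _ hs'.ne' ht'.ne', div_lt_iff₀ (by positivity)]
    nlinarith [sub_pos.2 hst]
  simp only
  linarith

theorem strictConvexOn_half_sq_add_log (ha : 0 < a) (hla : lam * a ≤ 1) :
    StrictConvexOn ℝ (Ici 0) fun t => 1 / 2 * t ^ 2 + lam * (1 / a * log (1 + a * t)) := by
  have hderiv : ∀ t ∈ Ici (0 : ℝ), HasDerivAt
      (fun u => 1 / 2 * u ^ 2 + lam * (1 / a * log (1 + a * u))) (t + lam / (1 + a * t)) t :=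
    fun t (ht : 0 ≤ t) => hasDerivAt_half_sq_add_log ha.ne' (by positivity)
  refine StrictMonoOn.strictConvexOn_of_deriv (convex_Ici 0)
    (fun t ht => (hderiv t ht).continuousAt.continuousWithinAt) ?_
  rw [interior_Ici]
  refine ((strictMonoOn_add_div_one_add_mul ha hla).mono Ioi_subset_Ici_self).congr ?_
  exact fun t (ht : 0 < t) => (hderiv t ht.le).deriv.symm

theorem strictMonoOn_half_sq_add_log (hlam : 0 ≤ lam) (ha : 0 < a) :
    StrictMonoOn (fun t => 1 / 2 * t ^ 2 + lam * (1 / a * log (1 + a * t))) (Ici 0) := by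
  refine StrictMonoOn.add_monotone ?_ ?_
  · exact fun s (hs : 0 ≤ s) t _ hst => by gcongr
  · exact fun s (hs : 0 ≤ s) t _ hst => by
      have : 0 < 1 + a * s := by positivity
      gcongr

end LogPenalty

/-- For `λ > 0` and `0 < a ≤ 1/λ`, the scalar cost
`F(x) = ½(y−x)² + λ·(1/a)·log(1 + a|x|)` is strictly convex for every `y`. -/
theorem strictConvex_scalar_log_penalty
    (lam a : ℝ) (hlam : 0 < lam) (ha : 0 < a) (ha' : a ≤ 1 / lam) (y : ℝ) :
    StrictConvexOn ℝ Set.univ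
      (fun x : ℝ => (1/2) * (y - x)^2 + lam * ((1/a) * Real.log (1 + a * |x|))) := by
  have hla : lam * a ≤ 1 := by rwa [le_div_iff₀ hlam, mul_comm] at ha'
  have hprofile := (strictConvexOn_half_sq_add_log ha hla).comp_abs_s6
    (strictMonoOn_half_sq_add_log hlam.le ha)
  have haffine : ConvexOn ℝ univ fun x => -y * x + 1 / 2 * y ^ 2 :=
    ((LinearMap.mulLeft ℝ (-y)).convexOn convex_univ).add_const _
  refine (hprofile.add_convexOn haffine).congr fun x _ => ?_
  simp only [Pi.add_apply, sq_abs]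
  ring
end

section
/- Let λ > 0 and let φ : ℝ → ℝ be an even function, differentiable on ℝ \ {0}, with right derivative φ'(0⁺) at 0, and suppose that for y ∈ ℝ the function F(x) = ½(y − x)² + λφ(x) is strictly convex. If |y| ≤ T, where T = λ·φ'(0⁺), then x = 0 is the unique global minimizer of F. -/
/-!
A strictly convex function exceeds its value at `a` to the right of `a` when its right derivative
at `a` is nonnegative, and to the left of `a` when its left derivative there is nonpositive.
At `0` the right derivative of `F` is `λd - y`, and since `φ` is even its left derivative is
`-λd - y`; the two sign conditions together are exactly `|y| ≤ λd`.
-/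

open Set

namespace StrictConvexOn

variable {S : Set ℝ} {f : ℝ → ℝ} {f' a x : ℝ}

lemma apply_lt_of_hasDerivWithinAt_Ioi_nonneg (hf : StrictConvexOn ℝ S f) (ha : a ∈ S)
    (hx : x ∈ S) (hax : a < x) (hf' : HasDerivWithinAt f f' (Ioi a) a) (hf'0 : 0 ≤ f') :
    f a < f x := by
  have hslope : 0 < (f x - f a) / (x - a) :=
    hf'0.trans_lt (slope_def_field f a x ▸ hf.lt_slope_of_hasDerivWithinAt_Ioi ha hx hax hf')
  rw [lt_div_iff₀ (sub_pos.2 hax), zero_mul] at hslope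
  exact sub_pos.1 hslope

lemma apply_lt_of_hasDerivWithinAt_Iio_nonpos (hf : StrictConvexOn ℝ S f) (ha : a ∈ S)
    (hx : x ∈ S) (hxa : x < a) (hf' : HasDerivWithinAt f f' (Iio a) a) (hf'0 : f' ≤ 0) :
    f a < f x := by
  have hslope : (f a - f x) / (a - x) < 0 :=
    (slope_def_field f x a ▸ hf.slope_lt_of_hasDerivWithinAt_Iio hx ha hxa hf').trans_le hf'0
  rw [div_lt_iff₀ (sub_pos.2 hxa), zero_mul] at hslope
  exact sub_neg.1 hslope

end StrictConvexOn

lemma HasDerivWithinAt.neg_of_even {φ : ℝ → ℝ} {d a : ℝ} {s : Set ℝ}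
    (heven : ∀ x, φ (-x) = φ x) (hd : HasDerivWithinAt φ d s a) :
    HasDerivWithinAt φ (-d) (-s) (-a) := by
  have hd' : HasDerivWithinAt φ d s (-(-a)) := by rwa [neg_neg]
  have hcomp := hd'.comp (-a) (hasDerivWithinAt_neg (-a) (-s)) fun t ht => mem_neg.1 ht
  rwa [show φ ∘ Neg.neg = φ from funext heven, mul_neg_one] at hcomp

theorem zero_is_unique_minimizer_below_threshold_general
    (lam : ℝ)
    (φ : ℝ → ℝ)
    (heven : ∀ x, φ (-x) = φ x)
    (d : ℝ) (hd : HasDerivWithinAt φ d (Set.Ici 0) 0)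
    (y : ℝ)
    (hF : StrictConvexOn ℝ Set.univ
      (fun x : ℝ => (1/2) * (y - x)^2 + lam * φ x))
    (hy : |y| ≤ lam * d) :
    ∀ x : ℝ, x ≠ 0 →
      (1/2) * (y - 0)^2 + lam * φ 0 < (1/2) * (y - x)^2 + lam * φ x := by
  intro x hx
  obtain ⟨hy_lower, hy_upper⟩ := abs_le.1 hy
  have hquad (s : Set ℝ) : HasDerivWithinAt (fun x : ℝ => (1/2) * (y - x)^2) (-y) s 0 := by
    have := ((hasDerivAt_id (0 : ℝ)).const_sub y |>.pow 2 |>.const_mul (1/2 : ℝ))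
    exact (this.congr_deriv (by simp)).hasDerivWithinAt
  have hd_right : HasDerivWithinAt φ d (Ioi 0) 0 := hd.mono Ioi_subset_Ici_self
  have hd_left : HasDerivWithinAt φ (-d) (Iio 0) 0 := by
    simpa using hd_right.neg_of_even heven
  rcases hx.lt_or_gt with hneg | hpos
  · exact hF.apply_lt_of_hasDerivWithinAt_Iio_nonpos (mem_univ _) (mem_univ _) hneg
      ((hquad _).add (hd_left.const_mul lam)) (by linarith)
  · exact hF.apply_lt_of_hasDerivWithinAt_Ioi_nonneg (mem_univ _) (mem_univ _) hpos
      ((hquad _).add (hd_right.const_mul lam)) (by linarith)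

/-- Thresholding below `T = λ·φ'(0⁺)`: if `F(x) = ½(y−x)² + λφ(x)` is strictly
convex and `|y| ≤ T`, then `x = 0` is the unique global minimizer of `F`. -/
theorem zero_is_unique_minimizer_below_threshold
    (lam : ℝ) (hlam : 0 < lam)
    (φ : ℝ → ℝ)
    (heven : ∀ x, φ (-x) = φ x)
    (hdiff : ∀ x : ℝ, x ≠ 0 → DifferentiableAt ℝ φ x)
    (d : ℝ) (hd : HasDerivWithinAt φ d (Set.Ici 0) 0)
    (y : ℝ)
    (hF : StrictConvexOn ℝ Set.univ
      (fun x : ℝ => (1/2) * (y - x)^2 + lam * φ x))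
    (hy : |y| ≤ lam * d) :
    ∀ x : ℝ, x ≠ 0 →
      (1/2) * (y - 0)^2 + lam * φ 0 < (1/2) * (y - x)^2 + lam * φ x :=
  zero_is_unique_minimizer_below_threshold_general lam φ heven d hd y hF hy
end

section
/- Let λ > 0 and let φ : ℝ → ℝ be an even function, differentiable on ℝ \ {0}, with right derivative φ'(0⁺) at 0, and suppose that for y ∈ ℝ with y > T = λ·φ'(0⁺) the function F(x) = ½(y − x)² + λφ(x) is strictly convex and attains a global minimum at x* ∈ ℝ. Then x* > 0 and x* satisfies the equation y = x* + λ·φ'(x*). -/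
/-!
Testing `F` at the midpoint `0` of `x` and `-x` and using that `φ` is even gives
`λ φ 0 ≤ x² / 2 + λ φ x`, so `0` minimises `x ↦ x² / 2 + λ φ x`; comparing right derivatives at
this minimum yields `λ φ'(0⁺) ≥ 0`, hence `y > 0`. Since `F 0` has right derivative
`λ φ'(0⁺) - y < 0`, the minimiser is not `0`, and as `F (-x) = F x - 2 x y` it is not negative
either. At `x* > 0` the function `F` is differentiable, and Fermat's rule gives the equation.
-/

open Set

theorem ConvexOn.two_mul_apply_zero_le_add_apply_neg {f : ℝ → ℝ} (hf : ConvexOn ℝ univ f)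
    (x : ℝ) : 2 * f 0 ≤ f x + f (-x) := by
  have h := hf.2 (mem_univ x) (mem_univ (-x)) (by norm_num : (0 : ℝ) ≤ 1 / 2)
    (by norm_num : (0 : ℝ) ≤ 1 / 2) (by norm_num)
  simp only [smul_eq_mul, mul_neg, add_neg_cancel] at h
  linarith

theorem IsLocalMinOn.hasDerivWithinAt_Ici_nonneg {f : ℝ → ℝ} {a f' : ℝ}
    (h : IsLocalMinOn f (Ici a) a) (hf : HasDerivWithinAt f f' (Ici a) a) : 0 ≤ f' := by
  have hone : (1 : ℝ) ∈ posTangentConeAt (Ici a) a :=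
    mem_posTangentConeAt_of_segment_subset (by simp [segment_eq_Icc, Icc_subset_Ici_self])
  simpa using h.hasFDerivWithinAt_nonneg hf.hasFDerivWithinAt hone

theorem HasDerivWithinAt.half_sq_sub_add_mul {φ : ℝ → ℝ} {φ' x : ℝ} {s : Set ℝ} (y c : ℝ)
    (hφ : HasDerivWithinAt φ φ' s x) :
    HasDerivWithinAt (fun t => 1 / 2 * (y - t) ^ 2 + c * φ t) (x - y + c * φ') s x := by
  have hsq := (((hasDerivWithinAt_id x s).const_sub y).fun_pow 2).const_mul (1 / 2 : ℝ)
  exact (hsq.add (hφ.const_mul c)).congr_deriv (by simp)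

theorem minimizer_above_threshold_general
    (lam : ℝ)
    (φ : ℝ → ℝ)
    (heven : ∀ x, φ (-x) = φ x)
    (hdiff : ∀ x : ℝ, x ≠ 0 → DifferentiableAt ℝ φ x)
    (d : ℝ) (hd : HasDerivWithinAt φ d (Set.Ici 0) 0)
    (y : ℝ) (hy : lam * d < y)
    (hF : StrictConvexOn ℝ Set.univ
      (fun x : ℝ => (1/2) * (y - x)^2 + lam * φ x))
    (xs : ℝ)
    (hmin : ∀ x : ℝ,
      (1/2) * (y - xs)^2 + lam * φ xs ≤ (1/2) * (y - x)^2 + lam * φ x) :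
    0 < xs ∧ y = xs + lam * deriv φ xs := by
  have hFmin : IsMinOn (fun x => 1 / 2 * (y - x) ^ 2 + lam * φ x) univ xs :=
    isMinOn_iff.2 fun x _ => hmin x
  have hmid (x : ℝ) : lam * φ 0 ≤ 1 / 2 * (0 - x) ^ 2 + lam * φ x := by
    have := hF.convexOn.two_mul_apply_zero_le_add_apply_neg x
    simp only [heven] at this
    linarith
  have hd_nonneg : 0 ≤ lam * d := by
    simpa using IsLocalMinOn.hasDerivWithinAt_Ici_nonneg
      (isMinOn_iff.2 fun x _ => by simpa using hmid x).localize (hd.half_sq_sub_add_mul 0 lam)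
  have hxs_ne : xs ≠ 0 := by
    rintro rfl
    have := IsLocalMinOn.hasDerivWithinAt_Ici_nonneg (hFmin.on_subset (subset_univ _)).localize
      (hd.half_sq_sub_add_mul y lam)
    linarith
  have hxs_pos : 0 < xs := by
    refine lt_of_le_of_ne (not_lt.1 fun hneg => ?_) hxs_ne.symm
    have := hmin (-xs)
    rw [heven] at this
    nlinarith
  have hfermat := (hFmin.isLocalMin Filter.univ_mem).hasDerivAt_eq_zero <|
    hasDerivWithinAt_univ.1 <|
      (hdiff xs hxs_ne).hasDerivAt.hasDerivWithinAt.half_sq_sub_add_mul y lam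
  exact ⟨hxs_pos, by linarith⟩

/-- Above the threshold `T = λ·φ'(0⁺)`: if `y > T` and the strictly convex
`F(x) = ½(y−x)² + λφ(x)` attains its global minimum at `x*`, then `x* > 0` and
`y = x* + λ·φ'(x*)`. -/
theorem minimizer_above_threshold
    (lam : ℝ) (hlam : 0 < lam)
    (φ : ℝ → ℝ)
    (heven : ∀ x, φ (-x) = φ x)
    (hdiff : ∀ x : ℝ, x ≠ 0 → DifferentiableAt ℝ φ x)
    (d : ℝ) (hd : HasDerivWithinAt φ d (Set.Ici 0) 0)
    (y : ℝ) (hy : lam * d < y)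
    (hF : StrictConvexOn ℝ Set.univ
      (fun x : ℝ => (1/2) * (y - x)^2 + lam * φ x))
    (xs : ℝ)
    (hmin : ∀ x : ℝ,
      (1/2) * (y - xs)^2 + lam * φ xs ≤ (1/2) * (y - x)^2 + lam * φ x) :
    0 < xs ∧ y = xs + lam * deriv φ xs :=
  minimizer_above_threshold_general lam φ heven hdiff d hd y hy hF xs hmin
end

section
/- Let λ > 0, 0 < a ≤ 1/λ, and y ≥ λ. Then the function F(x) = ½(y − x)² + (λ/a)·log(1 + a|x|) attains its unique global minimum over ℝ at x* = y/2 − 1/(2a) + √((y/2 + 1/(2a))² − λ/a). -/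
/-!
On `[0, ∞)` the cost is `G x = ½(y − x)² + (λ/a)·log(1 + a x)` (`LogThreshold.cost`), whose
derivative is `a (x − x₊)(x − x₋) / (1 + a x)`, where `x₊ = x*` and `x₋ = y/2 − 1/(2a) − √(…)`
are the roots of `(x − y)(1 + a x) + λ`. Their product `(λ − y)/a` is `≤ 0`, so `x₋ ≤ 0 ≤ x₊`:
on `[0, ∞)` the derivative has the sign of `x − x*`, and `x*` is the strict minimiser of `G`
there. Finally `F x = G |x| + y (|x| − x)`, and the last term is positive for `x < 0`.
-/

open Set

theorem lt_of_hasDerivAt_eq_pos_mul_sub {f g : ℝ → ℝ} {l x₀ x : ℝ} (hx₀ : l ≤ x₀)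
    (hf : ∀ x, l ≤ x → HasDerivAt f (g x * (x - x₀)) x) (hg : ∀ x, l < x → 0 < g x)
    (hx : l ≤ x) (hne : x ≠ x₀) : f x₀ < f x := by
  have hcont : ∀ s ⊆ Ici l, ContinuousOn f s := fun s hs x hx =>
    (hf x (hs hx)).continuousAt.continuousWithinAt
  rcases hne.lt_or_gt with hlt | hgt
  · refine strictAntiOn_of_hasDerivWithinAt_neg (f' := fun z => g z * (z - x₀))
      (convex_Icc l x₀) (hcont _ fun z hz => hz.1) (fun z hz => ?_) (fun z hz => ?_)
      ⟨hx, hlt.le⟩ ⟨hx₀, le_rfl⟩ hlt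
    · exact (hf z (interior_subset hz).1).hasDerivWithinAt
    · rw [interior_Icc] at hz
      exact mul_neg_of_pos_of_neg (hg z hz.1) (sub_neg.2 hz.2)
  · refine strictMonoOn_of_hasDerivWithinAt_pos (f' := fun z => g z * (z - x₀))
      (convex_Ici x₀) (hcont _ fun z hz => hx₀.trans hz) (fun z hz => ?_) (fun z hz => ?_)
      self_mem_Ici hgt.le hgt
    · exact (hf z (hx₀.trans (interior_subset hz))).hasDerivWithinAt
    · rw [interior_Ici] at hz
      exact mul_pos (hg z (hx₀.trans_lt hz)) (sub_pos.2 hz)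

namespace LogThreshold

variable (lam a y : ℝ)

noncomputable def cost (x : ℝ) : ℝ :=
  1 / 2 * (y - x) ^ 2 + lam / a * Real.log (1 + a * x)

theorem hasDerivAt_cost {x : ℝ} (ha : a ≠ 0) (hx : 0 < 1 + a * x) :
    HasDerivAt (cost lam a y) (x - y + lam / (1 + a * x)) x := by
  have hsub : HasDerivAt (fun x : ℝ => y - x) (-1) x := (hasDerivAt_id x).const_sub y
  have hlin : HasDerivAt (fun x : ℝ => 1 + a * x) a x := by
    simpa using ((hasDerivAt_id x).const_mul a).const_add 1
  refine ((hsub.pow 2).const_mul (1 / 2) |>.add ((hlin.log hx.ne').const_mul (lam / a)))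
    |>.congr_deriv ?_
  field_simp
  ring

variable {lam a y}

theorem div_le_sq_of_le (ha : 0 < a) (hy : lam ≤ y) : lam / a ≤ (y / 2 + 1 / (2 * a)) ^ 2 := by
  have hAMGM : (y / 2 + 1 / (2 * a)) ^ 2 = (y / 2 - 1 / (2 * a)) ^ 2 + y / a := by
    field_simp
    ring
  have : lam / a ≤ y / a := div_le_div_of_nonneg_right hy ha.le
  nlinarith [sq_nonneg (y / 2 - 1 / (2 * a))]

section Roots

variable {s : ℝ} (ha : 0 < a) (hs : s ^ 2 = (y / 2 + 1 / (2 * a)) ^ 2 - lam / a)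
include ha hs

theorem two_mul_mul_sq_eq : (2 * a * s) ^ 2 = (a * y + 1) ^ 2 - 4 * a * lam := by
  rw [mul_pow, hs]
  field_simp
  ring

theorem sub_add_div_eq_mul_sub_root {x : ℝ} (hx : 0 < 1 + a * x) :
    x - y + lam / (1 + a * x) =
      a * (x - (y / 2 - 1 / (2 * a) - s)) / (1 + a * x) * (x - (y / 2 - 1 / (2 * a) + s)) := by
  have := two_mul_mul_sq_eq ha hs
  rw [div_mul_eq_mul_div, eq_div_iff hx.ne', add_mul, div_mul_cancel₀ _ hx.ne']
  field_simp
  linear_combination this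

theorem roots_nonpos_nonneg (hy : lam ≤ y) (hs₀ : 0 ≤ s) :
    y / 2 - 1 / (2 * a) - s ≤ 0 ∧ 0 ≤ y / 2 - 1 / (2 * a) + s := by
  have hprod : (y / 2 - 1 / (2 * a) - s) * (y / 2 - 1 / (2 * a) + s) = (lam - y) / a := by
    have := two_mul_mul_sq_eq ha hs
    field_simp
    linear_combination (-1) * this
  have : (lam - y) / a ≤ 0 := div_nonpos_of_nonpos_of_nonneg (sub_nonpos.2 hy) ha.le
  constructor <;> nlinarith

theorem cost_root_lt_cost (hy : lam ≤ y) (hs₀ : 0 ≤ s) {x : ℝ} (hx : 0 ≤ x)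
    (hne : x ≠ y / 2 - 1 / (2 * a) + s) :
    cost lam a y (y / 2 - 1 / (2 * a) + s) < cost lam a y x := by
  obtain ⟨hlow, hroot⟩ := roots_nonpos_nonneg ha hs hy hs₀
  refine lt_of_hasDerivAt_eq_pos_mul_sub
    (g := fun z => a * (z - (y / 2 - 1 / (2 * a) - s)) / (1 + a * z)) hroot
    (fun z hz => ?_) (fun z hz => ?_) hx hne
  · have hpos : 0 < 1 + a * z := by positivity
    rw [← sub_add_div_eq_mul_sub_root ha hs hpos]
    exact hasDerivAt_cost lam a y ha.ne' hpos
  · have hpos : 0 < 1 + a * z := by positivity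
    exact div_pos (mul_pos ha (by linarith)) hpos

end Roots

theorem cost_abs_add (x : ℝ) :
    1 / 2 * (y - x) ^ 2 + lam / a * Real.log (1 + a * |x|) = cost lam a y |x| + y * (|x| - x) := by
  unfold cost
  linear_combination (-1 / 2 : ℝ) * sq_abs x

end LogThreshold

open LogThreshold

theorem log_threshold_explicit_minimizer_general
    (lam a y : ℝ) (hlam : 0 < lam) (ha : 0 < a) (hy : lam ≤ y)
    (F : ℝ → ℝ)
    (hF : F = fun x : ℝ => (1/2) * (y - x)^2 + (lam / a) * Real.log (1 + a * |x|))
    (xs : ℝ)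
    (hxs : xs = y/2 - 1/(2*a) + Real.sqrt ((y/2 + 1/(2*a))^2 - lam/a)) :
    ∀ x : ℝ, x ≠ xs → F xs < F x := by
  set s := Real.sqrt ((y / 2 + 1 / (2 * a)) ^ 2 - lam / a)
  have hs : s ^ 2 = (y / 2 + 1 / (2 * a)) ^ 2 - lam / a :=
    Real.sq_sqrt (sub_nonneg.2 (div_le_sq_of_le ha hy))
  have hxs₀ : 0 ≤ xs := hxs ▸ (roots_nonpos_nonneg ha hs hy (Real.sqrt_nonneg _)).2
  have hmin : ∀ z, 0 ≤ z → z ≠ xs → cost lam a y xs < cost lam a y z := by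
    subst hxs
    exact fun z => cost_root_lt_cost ha hs hy (Real.sqrt_nonneg _)
  intro x hne
  subst hF
  beta_reduce
  rw [cost_abs_add, cost_abs_add, abs_of_nonneg hxs₀, sub_self, mul_zero, add_zero]
  rcases le_or_gt 0 x with hx | hx
  · rw [abs_of_nonneg hx, sub_self, mul_zero, add_zero]
    exact hmin x hx hne
  · have hshift : 0 < y * (|x| - x) :=
      mul_pos (hlam.trans_le hy) (by rw [abs_of_neg hx]; linarith)
    have hle : cost lam a y xs ≤ cost lam a y |x| := by
      rcases eq_or_ne |x| xs with heq | hne'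
      · rw [heq]
      · exact (hmin |x| (abs_nonneg x) hne').le
    linarith

/-- Explicit formula for the logarithmic threshold function: for `λ > 0`,
`0 < a ≤ 1/λ` and `y ≥ λ`, the cost `F(x) = ½(y−x)² + (λ/a)·log(1 + a|x|)`
attains its unique global minimum at
`x* = y/2 − 1/(2a) + √((y/2 + 1/(2a))² − λ/a)`. -/
theorem log_threshold_explicit_minimizer
    (lam a y : ℝ) (hlam : 0 < lam) (ha : 0 < a) (ha' : a ≤ 1 / lam) (hy : lam ≤ y)
    (F : ℝ → ℝ)
    (hF : F = fun x : ℝ => (1/2) * (y - x)^2 + (lam / a) * Real.log (1 + a * |x|))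
    (xs : ℝ)
    (hxs : xs = y/2 - 1/(2*a) + Real.sqrt ((y/2 + 1/(2*a))^2 - lam/a)) :
    ∀ x : ℝ, x ≠ xs → F xs < F x :=
  log_threshold_explicit_minimizer_general lam a y hlam ha hy F hF xs hxs
end

section
/- Let H be a real M × N matrix, y ∈ ℝ^M, λ₀,…,λ_{N−1} > 0, and for each n let φₙ : ℝ → ℝ be even, continuous, and differentiable on ℝ \ {0} with one-sided derivatives φₙ'(0⁻) and φₙ'(0⁺) at 0. Suppose F(x) = ½‖y − Hx‖₂² + Σ_{n=0}^{N−1} λₙ φₙ(xₙ) is convex on ℝ^N. If x* ∈ ℝ^N satisfies, for every n: (i) [Hᵀ(y − Hx*)]ₙ = λₙ·φₙ'(xₙ*) whenever xₙ* ≠ 0, and (ii) [Hᵀ(y − Hx*)]ₙ ∈ [λₙ·φₙ'(0⁻), λₙ·φₙ'(0⁺)] whenever xₙ* = 0, then x* is a global minimizer of F. -/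
open Matrix Set

/-!
Fix `x` and put `v = x - x*`. Convexity of `t ↦ F (x* + t v)` makes `F x - F x*` dominate the right
derivative at `0`, which is `-[Hᵀ(y - Hx*)] ⬝ᵥ v` plus the terms `λₙ` times the right derivative of
`φₙ` at `xₙ*` in direction `vₙ`; when `xₙ* = 0` that is `φₙ'(0⁺) vₙ` or `φₙ'(0⁻) vₙ` according to
the sign of `vₙ`. The optimality conditions say precisely that each such term dominates the matching
summand of `[Hᵀ(y - Hx*)] ⬝ᵥ v`.
-/

theorem ConvexOn.le_sub_of_hasDerivWithinAt_Ici_line {E : Type*} [AddCommGroup E] [Module ℝ E]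
    {s : Set E} {f : E → ℝ} (hf : ConvexOn ℝ s f) {a b : E} (ha : a ∈ s) (hb : b ∈ s) {D : ℝ}
    (hD : HasDerivWithinAt (fun t : ℝ => f (a + t • (b - a))) D (Ici 0) 0) :
    D ≤ f b - f a := by
  have hline : ConvexOn ℝ (AffineMap.lineMap (k := ℝ) a b ⁻¹' s) (f ∘ AffineMap.lineMap a b) :=
    hf.comp_affineMap _
  have hcomp : f ∘ AffineMap.lineMap a b = fun t : ℝ => f (a + t • (b - a)) := by
    ext t
    simp [AffineMap.lineMap_apply_module', add_comm]
  have hD' : HasDerivWithinAt (f ∘ AffineMap.lineMap a b) D (Ioi 0) (0 : ℝ) :=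
    hcomp ▸ hD.mono Ioi_subset_Ici_self
  simpa [slope_def_field] using
    hline.le_slope_of_hasDerivWithinAt_Ioi (by simpa using ha) (by simpa using hb) one_pos hD'

theorem hasDerivAt_half_sum_sq_sub_mulVec_line {m n : Type*} [Fintype m] [Fintype n]
    (H : Matrix m n ℝ) (y : m → ℝ) (x v : n → ℝ) :
    HasDerivAt (fun t : ℝ => (1 / 2) * ∑ i, (y i - (H *ᵥ (x + t • v)) i) ^ 2)
      (-(Hᵀ *ᵥ (y - H *ᵥ x) ⬝ᵥ v)) 0 := by
  have hterm : ∀ i, HasDerivAt (fun t : ℝ => (y i - (H *ᵥ (x + t • v)) i) ^ 2)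
      (-2 * ((y - H *ᵥ x) i * (H *ᵥ v) i)) 0 := by
    intro i
    have hlin : HasDerivAt (fun t : ℝ => y i - (H *ᵥ (x + t • v)) i) (-(H *ᵥ v) i) 0 := by
      simpa [mulVec_add, mulVec_smul, sub_add_eq_sub_sub] using
        (hasDerivAt_mul_const ((H *ᵥ v) i)).const_sub (y i - (H *ᵥ x) i)
    refine (hlin.pow 2).congr_deriv ?_
    simp only [Pi.sub_apply, add_zero, zero_smul]
    ring
  refine ((HasDerivAt.fun_sum fun i _ => hterm i).const_mul (1 / 2 : ℝ)).congr_deriv ?_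
  rw [mulVec_transpose, ← dotProduct_mulVec, dotProduct, ← Finset.mul_sum]
  ring

theorem exists_hasDerivWithinAt_Ici_line_and_mul_le {φ : ℝ → ℝ} {a c l dm dp : ℝ} (w : ℝ)
    (hdm : HasDerivWithinAt φ dm (Iic 0) 0) (hdp : HasDerivWithinAt φ dp (Ici 0) 0)
    (hdiff : a ≠ 0 → DifferentiableAt ℝ φ a)
    (hne : a ≠ 0 → c = l * deriv φ a) (hzero : a = 0 → l * dm ≤ c ∧ c ≤ l * dp) :
    ∃ ψ, HasDerivWithinAt (fun t => φ (a + t * w)) ψ (Ici 0) 0 ∧ c * w ≤ l * ψ := by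
  have hline : HasDerivAt (fun t => a + t * w) w 0 := (hasDerivAt_mul_const w).const_add a
  rcases eq_or_ne a 0 with rfl | ha
  · obtain ⟨hlo, hhi⟩ := hzero rfl
    rcases le_total 0 w with hw | hw
    · refine ⟨dp * w, hdp.comp_of_eq 0 hline.hasDerivWithinAt (fun t ht => ?_) (by simp), ?_⟩
      · simpa using mul_nonneg (mem_Ici.mp ht) hw
      · nlinarith
    · refine ⟨dm * w, hdm.comp_of_eq 0 hline.hasDerivWithinAt (fun t ht => ?_) (by simp), ?_⟩
      · simpa using mul_nonpos_of_nonneg_of_nonpos (mem_Ici.mp ht) hw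
      · nlinarith
  · refine ⟨deriv φ a * w, ?_, (hne ha).symm ▸ (mul_assoc l _ w).le⟩
    exact ((hdiff ha).hasDerivAt.comp_of_eq 0 hline (by simp)).hasDerivWithinAt

theorem optimality_conditions_global_minimizer_general
    (M N : ℕ) (H : Matrix (Fin M) (Fin N) ℝ) (y : Fin M → ℝ)
    (lam : Fin N → ℝ)
    (φ : Fin N → ℝ → ℝ)
    (hdiff : ∀ n, ∀ x : ℝ, x ≠ 0 → DifferentiableAt ℝ (φ n) x)
    (dm dp : Fin N → ℝ)
    (hdm : ∀ n, HasDerivWithinAt (φ n) (dm n) (Set.Iic 0) 0)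
    (hdp : ∀ n, HasDerivWithinAt (φ n) (dp n) (Set.Ici 0) 0)
    (F : (Fin N → ℝ) → ℝ)
    (hF : F = fun x : Fin N → ℝ =>
      (1/2) * ∑ m, (y m - H.mulVec x m)^2 + ∑ n, lam n * φ n (x n))
    (hFconv : ConvexOn ℝ Set.univ F)
    (xs : Fin N → ℝ)
    (hopt1 : ∀ n, xs n ≠ 0 →
      Hᵀ.mulVec (y - H.mulVec xs) n = lam n * deriv (φ n) (xs n))
    (hopt2 : ∀ n, xs n = 0 →
      lam n * dm n ≤ Hᵀ.mulVec (y - H.mulVec xs) n ∧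
      Hᵀ.mulVec (y - H.mulVec xs) n ≤ lam n * dp n) :
    ∀ x : Fin N → ℝ, F xs ≤ F x := by
  intro x
  choose ψ hψ hle using fun n => exists_hasDerivWithinAt_Ici_line_and_mul_le (x n - xs n)
    (hdm n) (hdp n) (hdiff n (xs n)) (hopt1 n) (hopt2 n)
  have hline : HasDerivWithinAt (fun t : ℝ => F (xs + t • (x - xs)))
      (-(Hᵀ *ᵥ (y - H *ᵥ xs) ⬝ᵥ (x - xs)) + ∑ n, lam n * ψ n) (Ici 0) 0 := by
    subst hF
    exact (hasDerivAt_half_sum_sq_sub_mulVec_line H y xs (x - xs)).hasDerivWithinAt.add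
      (HasDerivWithinAt.fun_sum fun n _ => (hψ n).const_mul (lam n))
  have hdot : Hᵀ *ᵥ (y - H *ᵥ xs) ⬝ᵥ (x - xs) ≤ ∑ n, lam n * ψ n :=
    Finset.sum_le_sum fun n _ => hle n
  linarith [hFconv.le_sub_of_hasDerivWithinAt_Ici_line (mem_univ xs) (mem_univ x) hline]

/-- Optimality conditions: if the cost
`F(x) = ½‖y − Hx‖² + Σₙ λₙ φₙ(xₙ)` is convex and `x*` satisfies
`[Hᵀ(y − Hx*)]ₙ = λₙ φₙ'(xₙ*)` whenever `xₙ* ≠ 0` and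
`[Hᵀ(y − Hx*)]ₙ ∈ [λₙ φₙ'(0⁻), λₙ φₙ'(0⁺)]` whenever `xₙ* = 0`,
then `x*` is a global minimizer of `F`. -/
theorem optimality_conditions_global_minimizer
    (M N : ℕ) (H : Matrix (Fin M) (Fin N) ℝ) (y : Fin M → ℝ)
    (lam : Fin N → ℝ) (hlam : ∀ n, 0 < lam n)
    (φ : Fin N → ℝ → ℝ)
    (heven : ∀ n x, φ n (-x) = φ n x)
    (hcont : ∀ n, Continuous (φ n))
    (hdiff : ∀ n, ∀ x : ℝ, x ≠ 0 → DifferentiableAt ℝ (φ n) x)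
    (dm dp : Fin N → ℝ)
    (hdm : ∀ n, HasDerivWithinAt (φ n) (dm n) (Set.Iic 0) 0)
    (hdp : ∀ n, HasDerivWithinAt (φ n) (dp n) (Set.Ici 0) 0)
    (F : (Fin N → ℝ) → ℝ)
    (hF : F = fun x : Fin N → ℝ =>
      (1/2) * ∑ m, (y m - H.mulVec x m)^2 + ∑ n, lam n * φ n (x n))
    (hFconv : ConvexOn ℝ Set.univ F)
    (xs : Fin N → ℝ)
    (hopt1 : ∀ n, xs n ≠ 0 →
      Hᵀ.mulVec (y - H.mulVec xs) n = lam n * deriv (φ n) (xs n))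
    (hopt2 : ∀ n, xs n = 0 →
      lam n * dm n ≤ Hᵀ.mulVec (y - H.mulVec xs) n ∧
      Hᵀ.mulVec (y - H.mulVec xs) n ≤ lam n * dp n) :
    ∀ x : Fin N → ℝ, F xs ≤ F x :=
  optimality_conditions_global_minimizer_general M N H y lam φ hdiff dm dp hdm hdp F hF hFconv xs
    hopt1 hopt2
end
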